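/- If M ⊆ ℤ² is piecewise syndetic, α ∈ ℤ, δ ∈ ℤ \ {0}, and t ∈ ℤ, then the set {(A + αD + t, δD) : (A, D) ∈ M} is piecewise syndetic in ℤ². -/

import Mathlib

/-- A subset of an abelian group is thick if it contains a translate of every finite set. -/
def Thick {G : Type*} [AddCommGroup G] (T : Set G) : Prop :=
  ∀ F : Finset G, ∃ g : G, ∀ f ∈ F, g + f ∈ T

/-- A subset is piecewise syndetic if a finite union of its translates is thick. -/
def PWSyn {G : Type*} [AddCommGroup G] (S : Set G) : Prop :=
  ∃ F : Finset G, Thick {x : G | ∃ t ∈ F, x + t ∈ S}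

/-!
The map `(A, D) ↦ (A + αD + t, δD)` is a translate of an additive homomorphism `φ` of `ℤ²` whose
image has finite index: every point is `φ q + (0, r)` with `0 ≤ r < |δ|`. Piecewise syndeticity
passes through such maps: pull a finite set `E` back along `φ` (up to the finitely many remainders
`r`), translate it into the thick union of translates of `M`, and push forward again, absorbing the
remainders into the finite set of translates.
-/

variable {G H : Type*} [AddCommGroup G] [AddCommGroup H]

theorem PWSyn.image_affine {S : Set G} (hS : PWSyn S) (φ : G →+ H) (c : H) (R : Finset H)
    (hR : ∀ h, ∃ g, ∃ r ∈ R, h = φ g + r) : PWSyn ((fun x => φ x + c) '' S) := by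
  classical
  obtain ⟨F, hF⟩ := hS
  choose pre rem hrem hdecomp using hR
  refine ⟨(F ×ˢ R).image fun p => φ p.1 - p.2, fun E => ?_⟩
  obtain ⟨g₀, hg₀⟩ := hF (E.image pre)
  refine ⟨φ g₀ + c, fun e he => ?_⟩
  obtain ⟨f, hf, hfS⟩ := hg₀ (pre e) (Finset.mem_image_of_mem pre he)
  refine ⟨φ f - rem e,
    Finset.mem_image.2 ⟨(f, rem e), Finset.mem_product.2 ⟨hf, hrem e⟩, rfl⟩,
    g₀ + pre e + f, hfS, ?_⟩
  rw [eq_sub_of_add_eq' (hdecomp e).symm]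
  simp only [map_add]
  abel

def shearScale (α δ : ℤ) : ℤ × ℤ →+ ℤ × ℤ :=
  AddMonoidHom.mk' (fun q => (q.1 + α * q.2, δ * q.2)) fun p q => by
    ext <;> simp only [Prod.fst_add, Prod.snd_add] <;> ring

theorem exists_eq_shearScale_add {δ : ℤ} (hδ : δ ≠ 0) (α : ℤ) (p : ℤ × ℤ) :
    ∃ q, ∃ r ∈ (Finset.Ico 0 |δ|).image (Prod.mk 0), p = shearScale α δ q + r := by
  refine ⟨(p.1 - α * (p.2 / δ), p.2 / δ), (0, p.2 % δ),
    Finset.mem_image_of_mem _ (Finset.mem_Ico.2 ⟨Int.emod_nonneg _ hδ, Int.emod_lt_abs _ hδ⟩), ?_⟩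
  have hdiv : δ * (p.2 / δ) + p.2 % δ = p.2 := Int.mul_ediv_add_emod p.2 δ
  ext
  · simp [shearScale]
  · simp [shearScale, hdiv]

/-- Specialized affine-map lemma: if M ⊆ ℤ² is piecewise syndetic then so is
{(A + αD + t, δD) : (A, D) ∈ M} for δ ≠ 0. -/
theorem pwSyn_affine_image' (M : Set (ℤ × ℤ)) (hM : PWSyn M) (α : ℤ) (δ : ℤ) (hδ : δ ≠ 0)
    (t : ℤ) :
    PWSyn {p : ℤ × ℤ | ∃ q ∈ M, p = (q.1 + α * q.2 + t, δ * q.2)} := by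
  have h := hM.image_affine (shearScale α δ) (t, 0) _ (exists_eq_shearScale_add hδ α)
  convert h using 1
  ext p
  simp [shearScale, eq_comm]
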